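/- For 0 < q < 1, the bilateral Jackson integral ∫ E_{q²}(i(1−q²)q²ζ) e_{q²}(−i(1−q²)ζ) d_{q²}ζ, defined as (1−q²)Σ_{m∈ℤ} q^{2m}[f(q^{2m}) + f(−q^{2m})] with f(ζ) = E_{q²}(i(1−q²)q²ζ) e_{q²}(−i(1−q²)ζ), equals (2/(1−q²))·Θ₀, where Θ₀ = (1−q²) Σ_{m∈ℤ} 1/((1−q²)q^{2m} + (1−q²)^{−1}q^{−2m}). -/

import Mathlib

open Complex

/-- `E_{q²}(z) = (−z;q²)_∞` -/
noncomputable def qE (q : ℝ) (z : ℂ) : ℂ := ∏' j : ℕ, (1 + z * (q : ℂ) ^ (2 * j))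

/-- `e_{q²}(z) = 1/(z;q²)_∞` -/
noncomputable def qe (q : ℝ) (z : ℂ) : ℂ := (∏' j : ℕ, (1 - z * (q : ℂ) ^ (2 * j)))⁻¹

/-!
The integrand telescopes. Since `e_{q²}(−z) = 1/E_{q²}(z)` and `E_{q²}(z) = (1+z) E_{q²}(q²z)`,
`f(ζ) = E_{q²}(q²z) e_{q²}(−z) = 1/(1+z)` with `z = i(1−q²)ζ`; none of the products vanish, their
factors having real part at least `1`. Pairing `ζ` with `−ζ` gives `2/(1+(1−q²)²ζ²)`, and at
`ζ = q^{2m}` this is `2/(1−q²)` times `1/(r + r⁻¹)` with `r = (1−q²)q^{2m}`, the `m`-th term of `Θ₀`.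
-/

section

variable {q : ℝ}

lemma summable_norm_mul_ofReal_pow_two_mul (hq : |q| < 1) (z : ℂ) :
    Summable fun j : ℕ => ‖z * (q : ℂ) ^ (2 * j)‖ := by
  have hq2 : q ^ 2 < 1 := by nlinarith [abs_nonneg q, sq_abs q]
  refine ((summable_geometric_of_lt_one (sq_nonneg q) hq2).mul_left ‖z‖).congr fun j => ?_
  rw [norm_mul, norm_pow, norm_real, Real.norm_eq_abs, pow_mul, sq_abs]

lemma qE_eq_one_add_mul_qE_mul_sq (hq : |q| < 1) (z : ℂ) :
    qE q z = (1 + z) * qE q (z * (q : ℂ) ^ 2) := by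
  have htail : Summable fun j : ℕ => ‖z * (q : ℂ) ^ (2 * (j + 1))‖ :=
    (summable_nat_add_iff 1).2 (summable_norm_mul_ofReal_pow_two_mul hq z)
  have hM : Multipliable fun j : ℕ => 1 + z * (q : ℂ) ^ (2 * (j + 1)) :=
    multipliable_one_add_of_summable (R := ℂ) htail
  rw [qE, tprod_eq_zero_mul' (f := fun j : ℕ => 1 + z * (q : ℂ) ^ (2 * j)) hM, qE]
  congr 1
  · simp
  · exact tprod_congr fun j => by ring

lemma qE_ne_zero (hq : |q| < 1) {z : ℂ} (hz : 0 ≤ z.re) : qE q z ≠ 0 := by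
  refine tprod_one_add_ne_zero_of_summable (fun j h => ?_)
    (summable_norm_mul_ofReal_pow_two_mul hq z)
  have hre : 0 ≤ (z * (q : ℂ) ^ (2 * j)).re := by
    rw [← ofReal_pow, re_mul_ofReal]
    exact mul_nonneg hz ((even_two_mul j).pow_nonneg q)
  have hre_zero := congrArg re h
  simp only [add_re, one_re, zero_re] at hre_zero
  linarith

lemma qe_neg (z : ℂ) : qe q (-z) = (qE q z)⁻¹ := by
  simp only [qe, qE, neg_mul, sub_neg_eq_add]

lemma qE_mul_sq_mul_qe_neg (hq : |q| < 1) {z : ℂ} (hz : 0 ≤ z.re) :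
    qE q (z * (q : ℂ) ^ 2) * qe q (-z) = (1 + z)⁻¹ := by
  have hne : qE q (z * (q : ℂ) ^ 2) ≠ 0 := by
    refine qE_ne_zero hq ?_
    rw [← ofReal_pow, re_mul_ofReal]
    exact mul_nonneg hz (sq_nonneg q)
  rw [qe_neg, qE_eq_one_add_mul_qE_mul_sq hq z, mul_inv, mul_left_comm, mul_inv_cancel₀ hne,
    mul_one]

lemma one_div_add_inv {K : Type*} [Field K] (r : K) : 1 / (r + r⁻¹) = r / (1 + r ^ 2) := by
  rcases eq_or_ne r 0 with rfl | hr
  · simp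
  · field_simp; ring

lemma inv_one_add_I_mul_add_inv_one_sub_I_mul (r : ℝ) :
    (1 + I * r)⁻¹ + (1 - I * r)⁻¹ = 2 / (1 + r ^ 2) := by
  have hne : ∀ s : ℝ, (1 : ℂ) + I * s ≠ 0 := fun s h => by simpa using congrArg re h
  have hsub : (1 : ℂ) - I * r ≠ 0 := by simpa [sub_eq_add_neg] using hne (-r)
  have hprod : (1 + I * r) * (1 - I * r) = 1 + (r : ℂ) ^ 2 := by
    ring_nf; rw [I_sq]; ring
  rw [inv_add_inv (hne r) hsub, hprod]
  ring

noncomputable def jacksonIntegrand (q : ℝ) (ζ : ℂ) : ℂ :=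
  qE q (I * (1 - (q : ℂ) ^ 2) * (q : ℂ) ^ 2 * ζ) * qe q (-(I * (1 - (q : ℂ) ^ 2)) * ζ)

lemma jacksonIntegrand_ofReal (hq : |q| < 1) (t : ℝ) :
    jacksonIntegrand q t = (1 + I * ((1 - q ^ 2) * t : ℝ))⁻¹ := by
  rw [jacksonIntegrand, ← qE_mul_sq_mul_qe_neg hq (z := I * ((1 - q ^ 2) * t : ℝ))
    (by rw [I_mul_re, ofReal_im, neg_zero])]
  push_cast
  ring_nf

lemma jacksonIntegrand_add_neg (hq : |q| < 1) (t : ℝ) :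
    jacksonIntegrand q t + jacksonIntegrand q (-t) = 2 / (1 + ((1 - q ^ 2) * t : ℝ) ^ 2) := by
  rw [← ofReal_neg, jacksonIntegrand_ofReal hq, jacksonIntegrand_ofReal hq, mul_neg, ofReal_neg,
    mul_neg, ← sub_eq_add_neg, inv_one_add_I_mul_add_inv_one_sub_I_mul]

end

theorem jackson_integral_Ee_theta (q : ℝ) (hq0 : 0 < q) (hq1 : q < 1) :
    (1 - (q : ℂ) ^ 2) * ∑' m : ℤ,
        (q : ℂ) ^ (2 * m) *
          ((qE q (Complex.I * (1 - (q : ℂ) ^ 2) * (q : ℂ) ^ 2 * (q : ℂ) ^ (2 * m)) *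
              qe q (-(Complex.I * (1 - (q : ℂ) ^ 2)) * (q : ℂ) ^ (2 * m))) +
            (qE q (Complex.I * (1 - (q : ℂ) ^ 2) * (q : ℂ) ^ 2 * (-((q : ℂ) ^ (2 * m)))) *
              qe q (-(Complex.I * (1 - (q : ℂ) ^ 2)) * (-((q : ℂ) ^ (2 * m)))))) =
      (2 / (1 - (q : ℂ) ^ 2)) *
        ((1 - q ^ 2) * ∑' m : ℤ,
          (1 : ℝ) / ((1 - q ^ 2) * q ^ (2 * m) + (1 - q ^ 2)⁻¹ * q ^ (-(2 * m))) : ℝ) := by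
  have hq : |q| < 1 := abs_lt.2 ⟨by linarith, hq1⟩
  have hq2 : (1 : ℂ) - (q : ℂ) ^ 2 ≠ 0 := by
    exact_mod_cast (by nlinarith : (1 : ℝ) - q ^ 2 ≠ 0)
  have hterm (m : ℤ) : (1 - (q : ℂ) ^ 2) * ((q : ℂ) ^ (2 * m) *
      (jacksonIntegrand q ((q ^ (2 * m) : ℝ)) + jacksonIntegrand q (-(q ^ (2 * m) : ℝ)))) =
      2 * ((1 / ((1 - q ^ 2) * q ^ (2 * m) + (1 - q ^ 2)⁻¹ * q ^ (-(2 * m))) : ℝ) : ℂ) := by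
    rw [jacksonIntegrand_add_neg hq, zpow_neg, ← mul_inv, one_div_add_inv]
    push_cast
    ring
  simp only [jacksonIntegrand, ofReal_zpow] at hterm
  -- over a field `tsum_mul_left` needs no summability, so convergence of `Θ₀` is never used
  rw [← tsum_mul_left, tsum_congr hterm, tsum_mul_left, ofReal_mul, ofReal_tsum]
  push_cast
  field_simp
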